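/- A formula φ is a theorem of the Hilbert system GLS if and only if the second-level sequent ⇛ φ (with empty antecedent) is provable in GLS_seq. -/

import Mathlib

/-- Modal formulas: propositional variables, ⊥, →, □. -/
inductive Formula : Type
  | var : ℕ → Formula
  | bot : Formula
  | imp : Formula → Formula → Formula
  | box : Formula → Formula
deriving DecidableEq

/-- Levels of sequents in GLS_seq: first level (⇒) and second level (⇛). -/
inductive SeqLevel : Type
  | one
  | two
deriving DecidableEq

/-- The set of subformulas of a formula. -/
def Formula.subf : Formula → Finset Formula
  | .var p => {.var p}
  | .bot => {.bot}
  | .imp φ ψ => insert (.imp φ ψ) (φ.subf ∪ ψ.subf)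
  | .box φ => insert (.box φ) φ.subf

/-- SF(Ψ,Φ): all subformulas of formulas in Ψ ∪ Φ. -/
def SF (Ψ Φ : Finset Formula) : Finset Formula := (Ψ ∪ Φ).biUnion Formula.subf

def Formula.isBox : Formula → Bool
  | .box _ => true
  | _ => false

def Formula.unbox : Formula → Formula
  | .box φ => φ
  | φ => φ

/-- Θ_□ = {φ : □φ ∈ Θ}. -/
def boxInv (Θ : Finset Formula) : Finset Formula :=
  (Θ.filter fun ψ => ψ.isBox).image Formula.unbox

/-- The sequent calculus GLS_seq, on sequents of two levels.  The Bool parameter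
records whether the cut rule may be used: `GLSSeq true` is provability in GLS_seq,
`GLSSeq false` is cut-free provability.  The first-level fragment is exactly GL_seq. -/
inductive GLSSeq : Bool → SeqLevel → Finset Formula → Finset Formula → Prop
  | init (c lv φ) : GLSSeq c lv {φ} {φ}
  | initBot (c lv) : GLSSeq c lv {Formula.bot} ∅
  | cut {lv Γ Δ} (φ) : GLSSeq true lv Γ (insert φ Δ) → GLSSeq true lv (insert φ Γ) Δ →
      GLSSeq true lv Γ Δ
  | weak {c lv Γ Δ Γ' Δ'} : Γ ⊆ Γ' → Δ ⊆ Δ' → GLSSeq c lv Γ Δ → GLSSeq c lv Γ' Δ'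
  | impL {c lv Γ Δ φ ψ} : GLSSeq c lv Γ (insert φ Δ) → GLSSeq c lv (insert ψ Γ) Δ →
      GLSSeq c lv (insert (.imp φ ψ) Γ) Δ
  | impR {c lv Γ Δ φ ψ} : GLSSeq c lv (insert φ Γ) (insert ψ Δ) →
      GLSSeq c lv Γ (insert (.imp φ ψ) Δ)
  | boxGL {c Γ φ} : GLSSeq c .one (Γ ∪ Γ.image .box ∪ {.box φ}) {φ} →
      GLSSeq c .one (Γ.image .box) {.box φ}
  | boxL {c Γ Δ} (φ) : GLSSeq c .two (insert φ Γ) Δ → GLSSeq c .two (insert (.box φ) Γ) Δ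
  | lift {c Γ Δ} : GLSSeq c .one Γ Δ → GLSSeq c .two Γ Δ

/-- The sequent calculus GL_seq (on first-level sequents only). -/
inductive GLSeq : Bool → Finset Formula → Finset Formula → Prop
  | init (c φ) : GLSeq c {φ} {φ}
  | initBot (c) : GLSeq c {Formula.bot} ∅
  | cut {Γ Δ} (φ) : GLSeq true Γ (insert φ Δ) → GLSeq true (insert φ Γ) Δ → GLSeq true Γ Δ
  | weak {c Γ Δ Γ' Δ'} : Γ ⊆ Γ' → Δ ⊆ Δ' → GLSeq c Γ Δ → GLSeq c Γ' Δ'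
  | impL {c Γ Δ φ ψ} : GLSeq c Γ (insert φ Δ) → GLSeq c (insert ψ Γ) Δ →
      GLSeq c (insert (.imp φ ψ) Γ) Δ
  | impR {c Γ Δ φ ψ} : GLSeq c (insert φ Γ) (insert ψ Δ) → GLSeq c Γ (insert (.imp φ ψ) Δ)
  | boxGL {c Γ φ} : GLSeq c (Γ ∪ Γ.image .box ∪ {.box φ}) {φ} → GLSeq c (Γ.image .box) {.box φ}

/-- Proof trees of GLS_seq (cut included). -/
inductive GLSTree : SeqLevel → Finset Formula → Finset Formula → Type
  | init (lv φ) : GLSTree lv {φ} {φ}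
  | initBot (lv) : GLSTree lv {Formula.bot} ∅
  | cut {lv Γ Δ} (φ) : GLSTree lv Γ (insert φ Δ) → GLSTree lv (insert φ Γ) Δ → GLSTree lv Γ Δ
  | weak {lv Γ Δ} (Γ' Δ' : Finset Formula) : Γ ⊆ Γ' → Δ ⊆ Δ' → GLSTree lv Γ Δ → GLSTree lv Γ' Δ'
  | impL {lv Γ Δ} (φ ψ) : GLSTree lv Γ (insert φ Δ) → GLSTree lv (insert ψ Γ) Δ →
      GLSTree lv (insert (.imp φ ψ) Γ) Δ
  | impR {lv Γ Δ} (φ ψ) : GLSTree lv (insert φ Γ) (insert ψ Δ) → GLSTree lv Γ (insert (.imp φ ψ) Δ)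
  | boxGL (Γ φ) : GLSTree .one (Γ ∪ Γ.image .box ∪ {.box φ}) {φ} → GLSTree .one (Γ.image .box) {.box φ}
  | boxL {Γ Δ} (φ) : GLSTree .two (insert φ Γ) Δ → GLSTree .two (insert (.box φ) Γ) Δ
  | lift {Γ Δ} : GLSTree .one Γ Δ → GLSTree .two Γ Δ

/-- The set of principal formulas of all (□L) rules occurring in a proof tree. -/
def GLSTree.principals : ∀ {lv Γ Δ}, GLSTree lv Γ Δ → Finset Formula
  | _, _, _, .init _ _ => ∅
  | _, _, _, .initBot _ => ∅
  | _, _, _, .cut _ t₁ t₂ => t₁.principals ∪ t₂.principals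
  | _, _, _, .weak _ _ _ _ t => t.principals
  | _, _, _, .impL _ _ t₁ t₂ => t₁.principals ∪ t₂.principals
  | _, _, _, .impR _ _ t => t.principals
  | _, _, _, .boxGL _ _ t => t.principals
  | _, _, _, .boxL φ t => insert (Formula.box φ) t.principals
  | _, _, _, .lift t => t.principals

/-- A proof tree bundled with its level and conclusion. -/
abbrev PGLSTree : Type :=
  (lv : SeqLevel) × (Γ : Finset Formula) × (Δ : Finset Formula) × GLSTree lv Γ Δ

/-- The set of subproofs of a proof tree (including the tree itself). -/
def GLSTree.subproofs {lv Γ Δ} (t : GLSTree lv Γ Δ) : Set PGLSTree :=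
  insert ⟨lv, Γ, Δ, t⟩ <|
    match lv, Γ, Δ, t with
    | _, _, _, .init _ _ => ∅
    | _, _, _, .initBot _ => ∅
    | _, _, _, .cut _ t₁ t₂ => t₁.subproofs ∪ t₂.subproofs
    | _, _, _, .weak _ _ _ _ t₁ => t₁.subproofs
    | _, _, _, .impL _ _ t₁ t₂ => t₁.subproofs ∪ t₂.subproofs
    | _, _, _, .impR _ _ t₁ => t₁.subproofs
    | _, _, _, .boxGL _ _ t₁ => t₁.subproofs
    | _, _, _, .boxL _ t₁ => t₁.subproofs
    | _, _, _, .lift t₁ => t₁.subproofs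

/-- Kripke satisfaction over a frame `R` with atomic valuation `v`. -/
def KSat {W : Type} (R : W → W → Prop) (v : W → ℕ → Prop) : Formula → W → Prop
  | .var p, w => v w p
  | .bot, _ => False
  | .imp φ ψ, w => KSat R v φ w → KSat R v ψ w
  | .box φ, w => ∀ w', R w w' → KSat R v φ w'

/-- A GL-model: a nonempty, transitive, converse well-founded Kripke model. -/
structure GLModel where
  World : Type
  ne : Nonempty World
  R : World → World → Prop
  trans : Transitive R
  cwf : ∀ f : ℕ → World, ¬ ∀ i, R (f i) (f (i + 1))
  val : World → ℕ → Prop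

/-- Truth of a formula at a world of a GL-model. -/
def GLModel.sat (M : GLModel) (w : M.World) (φ : Formula) : Prop := KSat M.R M.val φ w

/-- Truth of a sequent Γ ▸ Δ at a world: some γ ∈ Γ is false or some δ ∈ Δ is true. -/
def GLModel.seqTrue (M : GLModel) (w : M.World) (Γ Δ : Finset Formula) : Prop :=
  (∃ γ ∈ Γ, ¬ M.sat w γ) ∨ (∃ δ ∈ Δ, M.sat w δ)

/-- w is Σ-reflexive: □α → α is true at w for every □α ∈ Σ. -/
def GLModel.reflexiveFor (M : GLModel) (w : M.World) (S : Finset Formula) : Prop :=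
  ∀ α : Formula, Formula.box α ∈ S → M.sat w ((Formula.box α).imp α)

/-- Saturation conditions (→L), (→R) for first-level sequents. -/
def Saturated1 (Γ Δ : Finset Formula) : Prop :=
  (∀ φ ψ : Formula, φ.imp ψ ∈ Γ → φ ∈ Δ ∨ ψ ∈ Γ) ∧
  (∀ φ ψ : Formula, φ.imp ψ ∈ Δ → φ ∈ Γ ∧ ψ ∈ Δ)

/-- Saturation for second-level sequents: additionally (□L). -/
def Saturated2 (Γ Δ : Finset Formula) : Prop :=
  Saturated1 Γ Δ ∧ ∀ φ : Formula, Formula.box φ ∈ Γ → φ ∈ Γ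

def Saturated : SeqLevel → Finset Formula → Finset Formula → Prop
  | .one => Saturated1
  | .two => Saturated2

/-- The Hilbert system GL. -/
inductive GLHilbert : Formula → Prop
  | ax1 (φ ψ : Formula) : GLHilbert (φ.imp (ψ.imp φ))
  | ax2 (φ ψ χ : Formula) :
      GLHilbert ((φ.imp (ψ.imp χ)).imp ((φ.imp ψ).imp (φ.imp χ)))
  | ax3 (φ : Formula) : GLHilbert (((φ.imp .bot).imp .bot).imp φ)
  | axK (φ ψ : Formula) :
      GLHilbert ((Formula.box (φ.imp ψ)).imp ((Formula.box φ).imp (Formula.box ψ)))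
  | axLob (φ : Formula) :
      GLHilbert ((Formula.box ((Formula.box φ).imp φ)).imp (Formula.box φ))
  | mp {φ ψ} : GLHilbert (φ.imp ψ) → GLHilbert φ → GLHilbert ψ
  | nec {φ} : GLHilbert φ → GLHilbert (Formula.box φ)

/-- The Hilbert system GLS: theorems of GL and all □α → α, closed under modus ponens. -/
inductive GLSHilbert : Formula → Prop
  | gl {φ} : GLHilbert φ → GLSHilbert φ
  | refl (α : Formula) : GLSHilbert ((Formula.box α).imp α)
  | mp {φ ψ} : GLSHilbert (φ.imp ψ) → GLSHilbert φ → GLSHilbert ψ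

/-- Conjunction (encoded with → and ⊥) of a list of formulas; empty conjunction is ⊤. -/
def Formula.conj : List Formula → Formula
  | [] => Formula.bot.imp Formula.bot
  | φ :: l => ((φ.imp ((Formula.conj l).imp .bot)).imp .bot)

/-- Membership predicate for the canonical model: saturated first-level sequents over S
that are not cut-free provable in GLS_seq. -/
def W0pred (S : Finset Formula) (s : Finset Formula × Finset Formula) : Prop :=
  Saturated1 s.1 s.2 ∧ ¬ GLSSeq false SeqLevel.one s.1 s.2 ∧ s.1 ∪ s.2 ⊆ S

/-- Worlds of the canonical model. -/
def W0 (S : Finset Formula) : Type := {s : Finset Formula × Finset Formula // W0pred S s}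

/-- Accessibility of the canonical model: (Γ⇒Δ) R₀ (Γ'⇒Δ') iff Γ_□ ⊊ Γ'_□ and Γ_□ ⊆ Γ'. -/
def R0 (S : Finset Formula) (s t : W0 S) : Prop :=
  boxInv s.1.1 ⊂ boxInv t.1.1 ∧ boxInv s.1.1 ⊆ t.1.1

/-- Valuation of the canonical model: p is true at (Γ⇒Δ) iff p ∈ Γ. -/
def V0 (S : Finset Formula) (s : W0 S) (p : ℕ) : Prop := Formula.var p ∈ s.1.1

/-- The extended set of worlds W = W₀ ∪ ℕ. -/
def Wext (S : Finset Formula) : Type := W0 S ⊕ ℕ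

/-- The extended accessibility relation, with distinguished world `wp` in W₀. -/
def Rext (S : Finset Formula) (wp : W0 S) : Wext S → Wext S → Prop
  | Sum.inl x, Sum.inl y => R0 S x y
  | Sum.inr _, Sum.inl y => y = wp ∨ R0 S wp y
  | Sum.inr n, Sum.inr m => m < n
  | Sum.inl _, Sum.inr _ => False

/-- The extended valuation: worlds in ℕ behave like the distinguished world `wp`. -/
def Vext (S : Finset Formula) (wp : W0 S) : Wext S → ℕ → Prop
  | Sum.inl x, p => V0 S x p
  | Sum.inr _, p => V0 S wp p

/-!
Every GLS axiom has a short GLS_seq derivation, and modus ponens is a cut. Conversely, read a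
sequent `Γ ⇒ Δ` as a refutation of the hypotheses `Γ, ¬Δ` in GL (first level) or GLS (second
level). Every rule preserves this reading: (□GL) because GL-derivability is preserved by boxing all
hypotheses, after which Löb's axiom and axiom 4 apply; (□L) by the GLS axiom `□α → α`; and (⇒⇛)
because GL ⊆ GLS.
-/

namespace Formula

def neg (φ : Formula) : Formula := φ.imp .bot

def and (φ ψ : Formula) : Formula := (φ.imp ψ.neg).neg

end Formula

inductive Derivable (T : Formula → Prop) (A : Set Formula) : Formula → Prop
  | hyp {φ} : φ ∈ A → Derivable T A φ
  | thm {φ} : T φ → Derivable T A φ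
  | mp {φ ψ} : Derivable T A (φ.imp ψ) → Derivable T A φ → Derivable T A ψ

def HasPropAxioms (T : Formula → Prop) : Prop :=
  (∀ φ ψ : Formula, T (φ.imp (ψ.imp φ))) ∧
  (∀ φ ψ χ : Formula, T ((φ.imp (ψ.imp χ)).imp ((φ.imp ψ).imp (φ.imp χ)))) ∧
  (∀ φ : Formula, T (φ.neg.neg.imp φ))

theorem GLHilbert.hasPropAxioms : HasPropAxioms GLHilbert :=
  ⟨.ax1, .ax2, .ax3⟩

theorem GLSHilbert.hasPropAxioms : HasPropAxioms GLSHilbert :=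
  ⟨fun φ ψ => .gl (.ax1 φ ψ), fun φ ψ χ => .gl (.ax2 φ ψ χ), fun φ => .gl (.ax3 φ)⟩

namespace Derivable

variable {T : Formula → Prop} {A A' : Set Formula} {φ ψ : Formula}

theorem mono (hA : A ⊆ A') (h : Derivable T A φ) : Derivable T A' φ := by
  induction h with
  | hyp hφ => exact hyp (hA hφ)
  | thm hφ => exact thm hφ
  | mp _ _ ih₁ ih₂ => exact mp ih₁ ih₂

theorem weaken_insert (h : Derivable T A φ) : Derivable T (insert ψ A) φ :=
  h.mono (Set.subset_insert ψ A)

theorem mono_theory {T' : Formula → Prop} (hT : ∀ χ, T χ → T' χ) (h : Derivable T A φ) :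
    Derivable T' A φ := by
  induction h with
  | hyp hφ => exact hyp hφ
  | thm hφ => exact thm (hT _ hφ)
  | mp _ _ ih₁ ih₂ => exact mp ih₁ ih₂

theorem trans (h : Derivable T A φ) (hA : ∀ χ ∈ A, Derivable T A' χ) : Derivable T A' φ := by
  induction h with
  | hyp hφ => exact hA _ hφ
  | thm hφ => exact thm hφ
  | mp _ _ ih₁ ih₂ => exact mp ih₁ ih₂

theorem of_empty (hmp : ∀ φ ψ, T (φ.imp ψ) → T φ → T ψ) (h : Derivable T ∅ φ) : T φ := by
  induction h with
  | hyp hφ => exact hφ.elim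
  | thm hφ => exact hφ
  | mp _ _ ih₁ ih₂ => exact hmp _ _ ih₁ ih₂

section PropAxioms

variable (hT : HasPropAxioms T)
include hT

theorem imp_self : Derivable T A (φ.imp φ) :=
  mp (mp (thm (hT.2.1 φ (φ.imp φ) φ)) (thm (hT.1 φ (φ.imp φ)))) (thm (hT.1 φ φ))

theorem deduction (h : Derivable T (insert φ A) ψ) : Derivable T A (φ.imp ψ) := by
  induction h with
  | hyp hχ =>
    rcases hχ with rfl | hχ
    · exact imp_self hT
    · exact mp (thm (hT.1 _ _)) (hyp hχ)
  | thm hχ => exact mp (thm (hT.1 _ _)) (thm hχ)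
  | mp _ _ ih₁ ih₂ => exact mp (mp (thm (hT.2.1 _ _ _)) ih₁) ih₂

theorem by_contra (h : Derivable T (insert φ.neg A) .bot) : Derivable T A φ :=
  mp (thm (hT.2.2 φ)) (deduction hT h)

theorem of_bot (h : Derivable T A .bot) : Derivable T A φ :=
  by_contra hT h.weaken_insert

theorem and_intro (h₁ : Derivable T A φ) (h₂ : Derivable T A ψ) : Derivable T A (φ.and ψ) :=
  deduction hT (mp (mp (hyp (Set.mem_insert _ _)) h₁.weaken_insert) h₂.weaken_insert)

theorem and_left (h : Derivable T A (φ.and ψ)) : Derivable T A φ := by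
  refine by_contra hT (mp h.weaken_insert (deduction hT (of_bot hT ?_)))
  exact mp (hyp (Set.mem_insert_of_mem _ (Set.mem_insert _ _))) (hyp (Set.mem_insert _ _))

theorem and_right (h : Derivable T A (φ.and ψ)) : Derivable T A ψ :=
  by_contra hT (mp h.weaken_insert (mp (thm (hT.1 _ _)) (hyp (Set.mem_insert _ _))))

end PropAxioms

end Derivable

namespace GLHilbert

open Derivable

theorem derivable_box {A : Set Formula} {φ : Formula} (h : Derivable GLHilbert A φ) :
    Derivable GLHilbert (Formula.box '' A) (.box φ) := by
  induction h with
  | hyp hφ => exact hyp (Set.mem_image_of_mem _ hφ)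
  | thm hφ => exact thm (nec hφ)
  | mp _ _ ih₁ ih₂ => exact .mp (.mp (thm (axK _ _)) ih₁) ih₂

/-- Axiom 4, derived from Löb's axiom for `α ∧ □α`. -/
theorem derivable_box_box (α : Formula) :
    Derivable GLHilbert {.box α} (.box (.box α)) := by
  have hT := hasPropAxioms
  set C := α.and (.box α)
  have boxC_boxα : Derivable GLHilbert {.box C} (.box α) := by
    simpa using derivable_box (and_left hT (hyp (Set.mem_singleton C)))
  have boxC_boxboxα : Derivable GLHilbert {.box C} (.box (.box α)) := by
    simpa using derivable_box (and_right hT (hyp (Set.mem_singleton C)))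
  have lob_premise : Derivable GLHilbert {α} ((Formula.box C).imp C) := by
    refine deduction hT (and_intro hT (hyp (by simp)) (boxC_boxα.trans fun _ hχ => hyp ?_))
    simp_all
  have boxα_boxC : Derivable GLHilbert {.box α} (.box C) := by
    simpa using Derivable.mp (thm (axLob C)) (derivable_box lob_premise)
  exact boxC_boxboxα.trans (by simpa using boxα_boxC)

end GLHilbert

def SeqLevel.hilbert : SeqLevel → Formula → Prop
  | .one => GLHilbert
  | .two => GLSHilbert

theorem SeqLevel.hasPropAxioms_hilbert : ∀ lv : SeqLevel, HasPropAxioms lv.hilbert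
  | .one => GLHilbert.hasPropAxioms
  | .two => GLSHilbert.hasPropAxioms

def sequentHyps (Γ Δ : Finset Formula) : Set Formula := ↑Γ ∪ Formula.neg '' ↑Δ

theorem sequentHyps_insert_left (Γ Δ : Finset Formula) (φ : Formula) :
    sequentHyps (insert φ Γ) Δ = insert φ (sequentHyps Γ Δ) := by
  rw [sequentHyps, Finset.coe_insert, Set.insert_union]; rfl

theorem sequentHyps_insert_right (Γ Δ : Finset Formula) (φ : Formula) :
    sequentHyps Γ (insert φ Δ) = insert φ.neg (sequentHyps Γ Δ) := by
  rw [sequentHyps, Finset.coe_insert, Set.image_insert_eq, Set.union_insert]; rfl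

theorem sequentHyps_singleton_right (Γ : Finset Formula) (φ : Formula) :
    sequentHyps Γ {φ} = insert φ.neg ↑Γ := by
  rw [sequentHyps, Finset.coe_singleton, Set.image_singleton, Set.union_singleton]

open Derivable in
/-- The (□GL) step: Löb's axiom turns `Γ, □Γ, □φ ⊢ φ` into `□Γ, □□Γ ⊢ □φ`, and axiom 4
removes `□□Γ`. -/
theorem GLHilbert.derivable_box_of_boxGL_premise {Γ : Finset Formula} {φ : Formula}
    (h : Derivable GLHilbert ↑(Γ ∪ Γ.image Formula.box ∪ {.box φ}) φ) :
    Derivable GLHilbert ↑(Γ.image Formula.box) (.box φ) := by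
  rw [Finset.coe_union, Finset.coe_singleton, Set.union_singleton] at h
  have hlob := Derivable.mp (thm (axLob φ)) (derivable_box (deduction hasPropAxioms h))
  refine hlob.trans fun χ hχ => ?_
  obtain ⟨ψ, hψ, rfl⟩ := hχ
  rw [Finset.mem_coe, Finset.mem_union, Finset.mem_image] at hψ
  rcases hψ with hψ | ⟨γ, hγ, rfl⟩
  · exact hyp (Finset.mem_image_of_mem _ hψ)
  · exact (derivable_box_box γ).mono (by simpa using hγ)

open Derivable in
theorem GLSSeq.derivable_bot {c : Bool} {lv : SeqLevel} {Γ Δ : Finset Formula}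
    (h : GLSSeq c lv Γ Δ) : Derivable lv.hilbert (sequentHyps Γ Δ) .bot := by
  induction h with
  | init c lv φ => exact mp (hyp (Or.inr ⟨φ, by simp, rfl⟩)) (hyp (Or.inl (by simp)))
  | initBot c lv => exact hyp (Or.inl (by simp))
  | @cut lv Γ Δ φ _ _ ih₁ ih₂ =>
    rw [sequentHyps_insert_right] at ih₁
    rw [sequentHyps_insert_left] at ih₂
    have hT := lv.hasPropAxioms_hilbert
    exact mp (deduction hT ih₂) (by_contra hT ih₁)
  | weak hΓ hΔ _ ih =>
    exact ih.mono (Set.union_subset_union (by exact_mod_cast hΓ)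
      (Set.image_mono (by exact_mod_cast hΔ)))
  | @impL c lv Γ Δ φ ψ _ _ ih₁ ih₂ =>
    rw [sequentHyps_insert_right] at ih₁
    rw [sequentHyps_insert_left] at ih₂ ⊢
    have hT := lv.hasPropAxioms_hilbert
    exact mp (deduction hT ih₂).weaken_insert
      (mp (hyp (Set.mem_insert _ _)) (by_contra hT ih₁).weaken_insert)
  | @impR c lv Γ Δ φ ψ _ ih =>
    rw [sequentHyps_insert_left, sequentHyps_insert_right, Set.insert_comm] at ih
    rw [sequentHyps_insert_right]
    have hT := lv.hasPropAxioms_hilbert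
    exact mp (hyp (Set.mem_insert _ _)) (deduction hT (by_contra hT ih)).weaken_insert
  | @boxGL c Γ φ _ ih =>
    rw [sequentHyps_singleton_right] at ih ⊢
    exact mp (hyp (Set.mem_insert _ _)) (GLHilbert.derivable_box_of_boxGL_premise
      (by_contra GLHilbert.hasPropAxioms ih)).weaken_insert
  | @boxL c Γ Δ φ _ ih =>
    rw [sequentHyps_insert_left] at ih ⊢
    exact mp (deduction GLSHilbert.hasPropAxioms ih).weaken_insert
      (mp (thm (GLSHilbert.refl φ)) (hyp (Set.mem_insert _ _)))
  | lift _ ih => exact ih.mono_theory fun _ => GLSHilbert.gl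

namespace GLSSeq

variable {c : Bool} {lv : SeqLevel} {Γ Δ : Finset Formula}

theorem of_mem (φ : Formula) (hΓ : φ ∈ Γ) (hΔ : φ ∈ Δ) : GLSSeq c lv Γ Δ :=
  weak (Finset.singleton_subset_iff.2 hΓ) (Finset.singleton_subset_iff.2 hΔ) (init c lv φ)

theorem of_bot_mem (h : Formula.bot ∈ Γ) : GLSSeq c lv Γ Δ :=
  weak (Finset.singleton_subset_iff.2 h) (Finset.empty_subset Δ) (initBot c lv)

theorem impL_of_mem (φ ψ : Formula) (h : φ.imp ψ ∈ Γ)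
    (h₁ : GLSSeq c lv Γ (insert φ Δ)) (h₂ : GLSSeq c lv (insert ψ Γ) Δ) : GLSSeq c lv Γ Δ := by
  simpa [Finset.insert_eq_self.2 h] using impL h₁ h₂

theorem impR_of_mem (φ ψ : Formula) (h : φ.imp ψ ∈ Δ)
    (h₁ : GLSSeq c lv (insert φ Γ) (insert ψ Δ)) : GLSSeq c lv Γ Δ := by
  simpa [Finset.insert_eq_self.2 h] using impR h₁

theorem boxGL_of_subset (Θ : Finset Formula) (φ : Formula) (hΘ : Θ.image Formula.box ⊆ Γ)
    (hφ : Formula.box φ ∈ Δ) (h : GLSSeq c .one (Θ ∪ Θ.image .box ∪ {.box φ}) {φ}) :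
    GLSSeq c .one Γ Δ :=
  weak hΘ (Finset.singleton_subset_iff.2 hφ) (boxGL h)

theorem mp_of_empty {φ ψ : Formula} (h₁ : GLSSeq true lv ∅ {φ.imp ψ})
    (h₂ : GLSSeq true lv ∅ {φ}) : GLSSeq true lv ∅ {ψ} := by
  refine cut (φ.imp ψ) (h₁.weak (by simp) (by simp)) ?_
  exact impL_of_mem φ ψ (by simp) (h₂.weak (by simp) (by simp))
    (of_mem ψ (by simp) (by simp))

theorem of_glHilbert {φ : Formula} (h : GLHilbert φ) : GLSSeq true .one ∅ {φ} := by
  induction h with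
  | ax1 φ ψ =>
    refine impR_of_mem φ (ψ.imp φ) (by simp) (impR_of_mem ψ φ (by simp) ?_)
    exact of_mem φ (by simp) (by simp)
  | ax2 φ ψ χ =>
    refine impR_of_mem (φ.imp (ψ.imp χ)) ((φ.imp ψ).imp (φ.imp χ)) (by simp)
      (impR_of_mem (φ.imp ψ) (φ.imp χ) (by simp) (impR_of_mem φ χ (by simp) ?_))
    refine impL_of_mem φ ψ (by simp) (of_mem φ (by simp) (by simp)) ?_
    refine impL_of_mem φ (ψ.imp χ) (by simp) (of_mem φ (by simp) (by simp)) ?_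
    refine impL_of_mem ψ χ (by simp) (of_mem ψ (by simp) (by simp)) ?_
    exact of_mem χ (by simp) (by simp)
  | ax3 φ =>
    refine impR_of_mem ((φ.imp .bot).imp .bot) φ (by simp)
      (impL_of_mem (φ.imp .bot) .bot (by simp) ?_ (of_bot_mem (by simp)))
    exact impR_of_mem φ .bot (by simp) (of_mem φ (by simp) (by simp))
  | axK φ ψ =>
    refine impR_of_mem (.box (φ.imp ψ)) ((Formula.box φ).imp (.box ψ)) (by simp)
      (impR_of_mem (.box φ) (.box ψ) (by simp) ?_)
    refine boxGL_of_subset {φ.imp ψ, φ} ψ (by simp [Finset.insert_subset_iff]) (by simp) ?_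
    exact impL_of_mem φ ψ (by simp) (of_mem φ (by simp) (by simp))
      (of_mem ψ (by simp) (by simp))
  | axLob φ =>
    refine impR_of_mem (.box ((Formula.box φ).imp φ)) (.box φ) (by simp) ?_
    refine boxGL_of_subset {(Formula.box φ).imp φ} φ (by simp) (by simp) ?_
    exact impL_of_mem (.box φ) φ (by simp) (of_mem (.box φ) (by simp) (by simp))
      (of_mem φ (by simp) (by simp))
  | mp _ _ ih₁ ih₂ => exact mp_of_empty ih₁ ih₂
  | @nec φ _ ih => exact boxGL_of_subset ∅ φ (by simp) (by simp) (ih.weak (by simp) (by simp))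

theorem of_glsHilbert {φ : Formula} (h : GLSHilbert φ) : GLSSeq true .two ∅ {φ} := by
  induction h with
  | gl h => exact lift (of_glHilbert h)
  | refl α =>
    exact impR_of_mem (.box α) α (by simp) (boxL α (of_mem α (by simp) (by simp)))
  | mp _ _ ih₁ ih₂ => exact mp_of_empty ih₁ ih₂

end GLSSeq

/-- φ is a theorem of the Hilbert system GLS iff the second-level sequent ⇛ φ is
provable in GLS_seq. -/
theorem glsHilbert_iff_glsSeq (φ : Formula) :
    GLSHilbert φ ↔ GLSSeq true SeqLevel.two ∅ {φ} := by
  refine ⟨GLSSeq.of_glsHilbert, fun h => ?_⟩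
  have refutation := h.derivable_bot
  rw [sequentHyps_singleton_right, Finset.coe_empty] at refutation
  exact (Derivable.by_contra GLSHilbert.hasPropAxioms refutation).of_empty fun _ _ => GLSHilbert.mp
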